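/- arXiv:2207.03413 — 2 statements merged into one kernel-verified Lean document; each statement's English description precedes it below -/
import Mathlib

section
/- Fix δ ∈ [0, 1 - 1/q) and ε with 0 < ε < 1 - h_q(δ). Let k = ⌈(1 - h_q(δ) - ε)·n⌉ and let G be a random k×n matrix over F_q with entries chosen independently and uniformly. Then with probability at least 1 - q^{-εn+1}, every nonzero vector u ∈ F_q^k satisfies wt(uG) ≥ δn; in particular the code generated by G has relative minimum distance at least δ and rate at least 1 - h_q(δ) - ε. -/
/-- The `q`-ary entropy function. -/
noncomputable def qaryEntropy (q : ℕ) (x : ℝ) : ℝ :=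
  x * Real.logb q (q - 1) - x * Real.logb q x - (1 - x) * Real.logb q (1 - x)

/-!
Union bound over the messages. For a fixed `u ≠ 0` the map `G ↦ u ᵥ* G` is a surjective additive
map, so `u ᵥ* G` is uniform on `F^n` and lands in the Hamming ball of radius `δn` with probability
`|ball| / q^n ≤ q^{(h_q(δ) - 1) n}`. Summing over the fewer than `q^k` messages and using
`k ≤ (1 - h_q(δ) - ε) n + 1` leaves `q^{1 - εn}`.

The volume bound `|ball| ≤ q^{h_q(δ) n}` compares the counting measure with the product
distribution giving `0` mass `1 - δ` and every other symbol mass `δ / (q - 1)`: every point of the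
ball has mass at least `q^{-h_q(δ) n}` because `δ ≤ 1 - 1/q` makes the nonzero symbols the less
likely ones.
-/

open Finset Matrix

theorem rpow_neg_qaryEntropy_mul {q : ℕ} (hq : 1 < q) {δ : ℝ} (h0 : 0 < δ) (h1 : δ < 1)
    (m : ℝ) :
    (q : ℝ) ^ (-(qaryEntropy q δ * m)) =
      (δ / (((q : ℝ) - 1) * (1 - δ))) ^ (δ * m) * (1 - δ) ^ m := by
  have hq1 : (1 : ℝ) < q := by exact_mod_cast hq
  have hlogq : Real.log q ≠ 0 := (Real.log_pos hq1).ne'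
  have hqm1 : (0 : ℝ) < (q : ℝ) - 1 := by linarith
  have h1δ : (0 : ℝ) < 1 - δ := by linarith
  rw [Real.rpow_def_of_pos (by linarith), Real.rpow_def_of_pos (by positivity),
    Real.rpow_def_of_pos h1δ, ← Real.exp_add, Real.log_div h0.ne' (by positivity),
    Real.log_mul hqm1.ne' h1δ.ne']
  simp only [qaryEntropy, Real.logb]
  field_simp
  congr 1
  ring

theorem AddMonoidHom.card_filter_mem_mul_card {G M : Type*} [AddGroup G] [Fintype G]
    [AddGroup M] [Fintype M] [DecidableEq M] (f : G →+ M) (hf : Function.Surjective f)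
    (s : Finset M) :
    #{g | f g ∈ s} * Fintype.card M = #s * Fintype.card G := by
  have hfiber (b : M) : #{g | f g = b} = #{g | f g = 0} :=
    card_fiber_eq_of_mem_range f (hf b) (hf 0)
  have hs : #{g | f g ∈ s} = ∑ b ∈ s, #{g | f g = b} := by
    rw [card_eq_sum_card_fiberwise (s := ({g | f g ∈ s} : Finset G)) (t := s)
      fun g hg => (mem_filter.mp hg).2]
    refine sum_congr rfl fun b hb => congrArg card ?_
    ext g
    simp only [mem_filter, mem_univ, true_and, and_iff_right_iff_imp]
    rintro rfl
    exact hb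
  have huniv : Fintype.card G = ∑ b : M, #{g | f g = b} :=
    card_eq_sum_card_fiberwise fun g _ => mem_univ (f g)
  simp only [hs, huniv, hfiber, sum_const, smul_eq_mul, card_univ]
  ring

section vecMul

variable {m n K : Type*} [Fintype m] [DecidableEq m] [Field K]

def Matrix.vecMulLeftAddHom (u : m → K) : Matrix m n K →+ (n → K) where
  toFun G := u ᵥ* G
  map_zero' := vecMul_zero u
  map_add' G G' := vecMul_add G G' u

theorem Matrix.vecMul_left_surjective {u : m → K} (hu : u ≠ 0) :
    Function.Surjective fun G : Matrix m n K => u ᵥ* G := by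
  obtain ⟨j, hj⟩ : ∃ j, u j ≠ 0 := Function.ne_iff.mp hu
  intro v
  refine ⟨of (Pi.single j ((u j)⁻¹ • v) : m → n → K), ?_⟩
  ext l
  simp [vecMul, dotProduct, Pi.single_apply, ite_apply, hj]

end vecMul

section HammingBall

variable {F : Type*} [Zero F] [DecidableEq F]

noncomputable def qaryWeight (q : ℕ) (δ : ℝ) (a : F) : ℝ :=
  if a = 0 then 1 - δ else δ / (q - 1)

theorem sum_qaryWeight [Fintype F] {q : ℕ} (hq : Fintype.card F = q) (hq1 : 1 < q) (δ : ℝ) :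
    ∑ a : F, qaryWeight q δ a = 1 := by
  have hne : #({a | a ≠ 0} : Finset F) = q - 1 := by
    rw [filter_ne', card_erase_of_mem (mem_univ _), card_univ, hq]
  have hq1' : (q : ℝ) - 1 ≠ 0 := by
    have : (1 : ℝ) < q := by exact_mod_cast hq1
    linarith
  simp only [qaryWeight, sum_ite, sum_const, filter_eq', mem_univ, if_true, card_singleton, hne]
  rw [one_smul, nsmul_eq_mul, Nat.cast_sub hq1.le, Nat.cast_one]
  field_simp
  ring

theorem qaryWeight_nonneg {q : ℕ} (hq : 1 < q) {δ : ℝ} (hδ0 : 0 ≤ δ) (hδ1 : δ ≤ 1) (a : F) :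
    0 ≤ qaryWeight q δ a := by
  have hq1 : (1 : ℝ) < q := by exact_mod_cast hq
  unfold qaryWeight
  split_ifs
  · linarith
  · exact div_nonneg hδ0 (by linarith)

theorem prod_qaryWeight {n : ℕ} (q : ℕ) (δ : ℝ) (v : Fin n → F) :
    ∏ l, qaryWeight q δ (v l) =
      (δ / (q - 1)) ^ hammingNorm v * (1 - δ) ^ (n - hammingNorm v) := by
  have hzero : #{l | v l = 0} = n - hammingNorm v := by
    have := card_filter_add_card_filter_not (s := univ) (fun l => v l = 0)
    rw [card_univ, Fintype.card_fin] at this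
    simp only [hammingNorm, ne_eq]
    omega
  simp only [qaryWeight, prod_ite, prod_const, hzero]
  rw [mul_comm]
  rfl

theorem rpow_neg_qaryEntropy_mul_le_prod_qaryWeight {q n : ℕ} (hq : 1 < q) {δ : ℝ}
    (hδ0 : 0 < δ) (hδ1 : δ ≤ 1 - 1 / q) {v : Fin n → F} (hv : (hammingNorm v : ℝ) ≤ δ * n) :
    (q : ℝ) ^ (-(qaryEntropy q δ * n)) ≤ ∏ l, qaryWeight q δ (v l) := by
  have hq1 : (1 : ℝ) < q := by exact_mod_cast hq
  have hδ1' : δ < 1 := hδ1.trans_lt (sub_lt_self _ (by positivity))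
  have h1δ : 0 < 1 - δ := by linarith
  have hqm1 : (0 : ℝ) < q - 1 := by linarith
  have hδq : δ * q ≤ q - 1 := calc
    δ * q ≤ (1 - 1 / q) * q := by gcongr
    _ = q - 1 := by field_simp
  set r := δ / (((q : ℝ) - 1) * (1 - δ)) with hr
  have hr0 : 0 < r := div_pos hδ0 (mul_pos hqm1 h1δ)
  have hr1 : r ≤ 1 := by
    rw [hr, div_le_one (mul_pos hqm1 h1δ)]
    linarith
  have hwt : hammingNorm v ≤ n := by simpa using hammingNorm_le_card_fintype (x := v)
  have hprod : ∏ l, qaryWeight q δ (v l) = r ^ hammingNorm v * (1 - δ) ^ n := by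
    rw [prod_qaryWeight, show δ / ((q : ℝ) - 1) = r * (1 - δ) by rw [hr]; field_simp,
      mul_pow, mul_assoc, ← pow_add, Nat.add_sub_cancel' hwt]
  rw [hprod, rpow_neg_qaryEntropy_mul hq hδ0 hδ1', ← hr, ← Real.rpow_natCast,
    ← Real.rpow_natCast]
  exact mul_le_mul_of_nonneg_right (Real.rpow_le_rpow_of_exponent_ge hr0 hr1 hv) (by positivity)

theorem card_filter_hammingNorm_lt_le [Fintype F] [Nontrivial F] {q n : ℕ}
    (hq : Fintype.card F = q) {δ : ℝ} (hδ1 : δ ≤ 1 - 1 / q) :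
    (#{v : Fin n → F | (hammingNorm v : ℝ) < δ * n} : ℝ) ≤ (q : ℝ) ^ (qaryEntropy q δ * n) := by
  have hq1 : 1 < q := hq ▸ Fintype.one_lt_card
  have hq0 : (0 : ℝ) < q := by positivity
  set B : Finset (Fin n → F) := {v | (hammingNorm v : ℝ) < δ * n}
  rcases le_or_gt δ 0 with hδ0 | hδ0
  · have hempty : B = ∅ :=
      filter_false_of_mem fun v _ => not_lt.mpr ((mul_nonpos_of_nonpos_of_nonneg hδ0
        n.cast_nonneg).trans (Nat.cast_nonneg _))
    rw [hempty, card_empty, Nat.cast_zero]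
    positivity
  rw [← div_le_one (by positivity), div_eq_mul_inv, ← Real.rpow_neg hq0.le]
  calc (#B : ℝ) * (q : ℝ) ^ (-(qaryEntropy q δ * n))
      = ∑ v ∈ B, (q : ℝ) ^ (-(qaryEntropy q δ * n)) := by rw [sum_const, nsmul_eq_mul]
    _ ≤ ∑ v ∈ B, ∏ l, qaryWeight q δ (v l) :=
        sum_le_sum fun v hv => rpow_neg_qaryEntropy_mul_le_prod_qaryWeight hq1 hδ0 hδ1
          (mem_filter.mp hv).2.le
    _ ≤ ∑ v : Fin n → F, ∏ l, qaryWeight q δ (v l) :=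
        sum_le_sum_of_subset_of_nonneg (subset_univ _) fun v _ _ => prod_nonneg fun l _ =>
          qaryWeight_nonneg hq1 hδ0.le (hδ1.trans (sub_le_self _ (by positivity))) _
    _ = 1 := by rw [← Fintype.prod_sum, sum_qaryWeight hq hq1, prod_const_one]

end HammingBall

theorem card_filter_exists_vecMul_mem_mul_le {m n K : Type*} [Fintype m] [DecidableEq m]
    [Fintype n] [DecidableEq n] [Field K] [Fintype K] [DecidableEq K] (B : Finset (n → K)) :
    #{G : Matrix m n K | ∃ u ≠ 0, u ᵥ* G ∈ B} * Fintype.card (n → K) ≤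
      Fintype.card (m → K) * (#B * Fintype.card (Matrix m n K)) := by
  have hsub : ({G : Matrix m n K | ∃ u ≠ 0, u ᵥ* G ∈ B} : Finset _) ⊆
      ({u | u ≠ 0} : Finset (m → K)).biUnion fun u => {G | u ᵥ* G ∈ B} := by
    intro G hG
    obtain ⟨u, hu, huG⟩ := (mem_filter.mp hG).2
    exact mem_biUnion.mpr ⟨u, mem_filter.mpr ⟨mem_univ _, hu⟩, mem_filter.mpr ⟨mem_univ _, huG⟩⟩
  calc #{G : Matrix m n K | ∃ u ≠ 0, u ᵥ* G ∈ B} * Fintype.card (n → K)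
      ≤ (∑ u ∈ ({u | u ≠ 0} : Finset (m → K)), #{G : Matrix m n K | u ᵥ* G ∈ B}) *
          Fintype.card (n → K) := by
        gcongr
        exact (card_le_card hsub).trans card_biUnion_le
    _ = ∑ u ∈ ({u | u ≠ 0} : Finset (m → K)), #B * Fintype.card (Matrix m n K) := by
        rw [sum_mul]
        exact sum_congr rfl fun u hu => (vecMulLeftAddHom u).card_filter_mem_mul_card
          (vecMul_left_surjective (mem_filter.mp hu).2) B
    _ ≤ Fintype.card (m → K) * (#B * Fintype.card (Matrix m n K)) := by
        rw [sum_const, smul_eq_mul]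
        gcongr
        exact card_filter_le _ _

theorem one_sub_le_card_filter_div_card {α : Type*} [Fintype α] [Nonempty α] (p : α → Prop)
    [DecidablePred p] {x : ℝ} (h : (#{a | ¬ p a} : ℝ) ≤ x * Fintype.card α) :
    1 - x ≤ #{a | p a} / Fintype.card α := by
  have hsplit : (#{a | p a} : ℝ) + #{a | ¬ p a} = Fintype.card α := by
    exact_mod_cast card_filter_add_card_filter_not (s := univ) p
  rw [le_div_iff₀ (by exact_mod_cast Fintype.card_pos)]
  linarith

theorem stmt2_general {q n : ℕ} {F : Type*} [Field F] [Fintype F] [DecidableEq F]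
    (hqcard : Fintype.card F = q) (hn : 0 < n)
    (δ ε : ℝ) (hδ1 : δ < 1 - 1 / q)
    (hε1 : ε < 1 - qaryEntropy q δ)
    (k : ℕ) (hk : k = ⌈(1 - qaryEntropy q δ - ε) * n⌉₊) :
    (1 : ℝ) - (q : ℝ) ^ (-(ε * n) + 1) ≤
      ((Finset.univ.filter (fun G : Matrix (Fin k) (Fin n) F =>
          ∀ u : Fin k → F, u ≠ 0 → δ * n ≤ (hammingNorm (Matrix.vecMul u G) : ℝ))).card : ℝ) /
        (Fintype.card (Matrix (Fin k) (Fin n) F)) ∧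
      1 - qaryEntropy q δ - ε ≤ (k : ℝ) / n := by
  refine ⟨one_sub_le_card_filter_div_card _ ?_,
    by rw [le_div_iff₀ (by exact_mod_cast hn), hk]; exact Nat.le_ceil _⟩
  have hq1 : (1 : ℝ) ≤ q := by rw [← hqcard]; exact_mod_cast Fintype.card_pos
  have hq0 : (0 : ℝ) < q := by linarith
  set B : Finset (Fin n → F) := {v | (hammingNorm v : ℝ) < δ * n}
  have hbad := card_filter_exists_vecMul_mem_mul_le (m := Fin k) B
  simp only [Fintype.card_fun, Fintype.card_fin, hqcard] at hbad
  have hball : (#B : ℝ) ≤ (q : ℝ) ^ (qaryEntropy q δ * n) :=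
    card_filter_hammingNorm_lt_le hqcard hδ1.le
  have hk_le : (k : ℝ) ≤ (1 - qaryEntropy q δ - ε) * n + 1 :=
    hk ▸ (Nat.ceil_lt_add_one (mul_nonneg (by linarith) n.cast_nonneg)).le
  have hexp : (q : ℝ) ^ k * (q : ℝ) ^ (qaryEntropy q δ * n) ≤
      (q : ℝ) ^ (-(ε * n) + 1) * q ^ n := by
    rw [← Real.rpow_natCast, ← Real.rpow_natCast, ← Real.rpow_add hq0, ← Real.rpow_add hq0]
    exact Real.rpow_le_rpow_of_exponent_le hq1 (by linarith)
  rw [filter_congr (q := fun G => ∃ u ≠ 0, u ᵥ* G ∈ B) fun G _ => by simp [B]]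
  refine le_of_mul_le_mul_right ?_ (pow_pos hq0 n)
  calc _ ≤ (q : ℝ) ^ k * (#B * Fintype.card (Matrix (Fin k) (Fin n) F)) := by
        exact_mod_cast hbad
    _ ≤ (q : ℝ) ^ k * (q : ℝ) ^ (qaryEntropy q δ * n) *
          Fintype.card (Matrix (Fin k) (Fin n) F) := by
        rw [← mul_assoc]; gcongr
    _ ≤ (q : ℝ) ^ (-(ε * n) + 1) * q ^ n * Fintype.card (Matrix (Fin k) (Fin n) F) :=
        mul_le_mul_of_nonneg_right hexp (Nat.cast_nonneg _)
    _ = _ := by ring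

/-- For `δ ∈ [0, 1 - 1/q)`, `0 < ε < 1 - h_q(δ)` and
`k = ⌈(1 - h_q(δ) - ε)·n⌉`, a uniformly random `k×n` matrix `G` over `F_q`
satisfies, with probability at least `1 - q^(-εn+1)`, that every nonzero
`u ∈ F_q^k` has `wt(uG) ≥ δn`; moreover the rate is at least `1 - h_q(δ) - ε`. -/
theorem stmt2 {q n : ℕ} {F : Type*} [Field F] [Fintype F] [DecidableEq F]
    (hqcard : Fintype.card F = q) (hn : 0 < n)
    (δ ε : ℝ) (hδ0 : 0 ≤ δ) (hδ1 : δ < 1 - 1 / q)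
    (hε0 : 0 < ε) (hε1 : ε < 1 - qaryEntropy q δ)
    (k : ℕ) (hk : k = ⌈(1 - qaryEntropy q δ - ε) * n⌉₊) :
    (1 : ℝ) - (q : ℝ) ^ (-(ε * n) + 1) ≤
      ((Finset.univ.filter (fun G : Matrix (Fin k) (Fin n) F =>
          ∀ u : Fin k → F, u ≠ 0 → δ * n ≤ (hammingNorm (Matrix.vecMul u G) : ℝ))).card : ℝ) /
        (Fintype.card (Matrix (Fin k) (Fin n) F)) ∧
      1 - qaryEntropy q δ - ε ≤ (k : ℝ) / n :=
  stmt2_general hqcard hn δ ε hδ1 hε1 k hk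
end

section
/- In the (q,k,ℓ,μ)-PRNG identification scheme with an LFSR of length μ < k as the generator, there exist two distinct messages u, u' ∈ F_q^k such that for every initial state σ ∈ F_q^μ the tag vectors coincide: u·G(σ) = u'·G(σ). Hence the false-acceptance probability for this pair equals 1. -/
/-- In the `(q,k,ℓ,μ)`-PRNG identification scheme with an LFSR of length
`μ < k` as the generator, there exist two distinct messages `u ≠ u'` whose tag vectors
coincide for every seed `σ`: `u·G(σ) = u'·G(σ)`; hence the false-acceptance probability
for this pair equals `1`. -/
theorem stmt9 {F : Type*} [Field F] (μ k ℓ : ℕ) (hμk : μ < k)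
    (a : ℕ → F) (h0 : a 0 = 1)
    (s : (Fin μ → F) → ℕ → F)
    (hinit : ∀ (σ : Fin μ → F) (i : Fin μ), s σ (i.val + 1) = σ i)
    (hrec : ∀ (σ : Fin μ → F), ∀ i ≥ μ + 1,
      s σ i = -∑ j ∈ Finset.Icc 1 μ, a j * s σ (i - j))
    (G : (Fin μ → F) → Matrix (Fin k) (Fin ℓ) F)
    (hG : ∀ (σ : Fin μ → F) (i : Fin k) (m : Fin ℓ), G σ i m = s σ (m.val * k + i.val + 1)) :
    ∃ u u' : Fin k → F, u ≠ u' ∧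
      ∀ σ : Fin μ → F, Matrix.vecMul u (G σ) = Matrix.vecMul u' (G σ) := by
  classical
  refine ⟨(fun i => if k ≤ i.val + μ + 1 then a (k - 1 - i.val) else 0), 0, ?_, ?_⟩
  · intro h
    have h1 := congrFun h ⟨k - 1, by omega⟩
    simp only [Pi.zero_apply] at h1
    rw [if_pos (by omega)] at h1
    have : k - 1 - (k - 1) = 0 := by omega
    rw [this, h0] at h1
    exact one_ne_zero h1
  · intro σ
    funext m
    rw [Matrix.zero_vecMul]
    simp only [Matrix.vecMul, dotProduct, Pi.zero_apply]
    have hcol : ∀ i : Fin k, G σ i m = s σ (m.val * k + i.val + 1) := fun i => hG σ i m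
    calc ∑ i : Fin k, (if k ≤ i.val + μ + 1 then a (k - 1 - i.val) else 0) * G σ i m
        = ∑ j ∈ Finset.range (μ + 1), a j * s σ (m.val * k + k - j) := by
          simp only [ite_mul, zero_mul]
          rw [← Finset.sum_filter]
          refine Finset.sum_nbij' (fun i => k - 1 - i.val)
            (fun j => ⟨k - 1 - j, by omega⟩) ?_ ?_ ?_ ?_ ?_
          · intro i hi
            simp only [Finset.mem_filter, Finset.mem_univ, true_and] at hi
            simp only [Finset.mem_range]
            omega
          · intro j hj
            simp only [Finset.mem_range] at hj
            simp only [Finset.mem_filter, Finset.mem_univ, true_and]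
            omega
          · intro i hi
            simp only [Finset.mem_filter, Finset.mem_univ, true_and] at hi
            ext
            simp only
            omega
          · intro j hj
            simp only [Finset.mem_range] at hj
            simp only
            omega
          · intro i hi
            simp only [Finset.mem_filter, Finset.mem_univ, true_and] at hi
            rw [hcol i]
            show a (k - 1 - i.val) * s σ (m.val * k + i.val + 1)
              = a (k - 1 - i.val) * s σ (m.val * k + k - (k - 1 - i.val))
            congr 2
            omega
      _ = a 0 * s σ (m.val * k + k) + ∑ j ∈ Finset.Icc 1 μ, a j * s σ (m.val * k + k - j) := by
          rw [Finset.sum_range_succ']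
          rw [← Finset.Ico_add_one_right_eq_Icc, Finset.sum_Ico_eq_sum_range]
          simp only [Nat.add_sub_cancel, Nat.sub_zero]
          rw [add_comm]
          congr 1
          apply Finset.sum_congr rfl
          intro i _
          rw [Nat.add_comm 1 i]
      _ = 0 := by
          rw [h0, one_mul, hrec σ (m.val * k + k) (by nlinarith), neg_add_cancel]
end
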